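/- For every point P ∈ S, the number of points Q ∈ S such that the line through P and Q is a halving line of S is odd. Equivalently, every vertex of the underlying graph of S has odd degree. -/

import Mathlib

/-- Planar cross product (signed area determinant) of two vectors in `ℝ × ℝ`. -/
def det2 (u v : ℝ × ℝ) : ℝ := u.1 * v.2 - u.2 * v.1

/-- Dot product of two vectors in `ℝ × ℝ`. -/
def dot2 (u v : ℝ × ℝ) : ℝ := u.1 * v.1 + u.2 * v.2

/-- A finite set of points of the plane is in general position if no three
distinct points of it are collinear. -/
def GenPos (S : Finset (ℝ × ℝ)) : Prop :=
  ∀ P ∈ S, ∀ Q ∈ S, ∀ R ∈ S, P ≠ Q → P ≠ R → Q ≠ R →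
    ¬ Collinear ℝ ({P, Q, R} : Set (ℝ × ℝ))

/-- The line through the two distinct points `P, Q ∈ S` is a halving line of `S`:
each of the two open half-planes it determines contains exactly
`(S.card - 2) / 2` points of `S`. -/
def IsHalving (S : Finset (ℝ × ℝ)) (P Q : ℝ × ℝ) : Prop :=
  P ∈ S ∧ Q ∈ S ∧ P ≠ Q ∧
  {X ∈ (S : Set (ℝ × ℝ)) | 0 < det2 (Q - P) (X - P)}.ncard = (S.card - 2) / 2 ∧
  {X ∈ (S : Set (ℝ × ℝ)) | det2 (Q - P) (X - P) < 0}.ncard = (S.card - 2) / 2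

/-- Degree of a point in the underlying graph of `S`: the number of points `Q`
such that the line `PQ` is a halving line of `S`. -/
noncomputable def hdeg (S : Finset (ℝ × ℝ)) (P : ℝ × ℝ) : ℕ :=
  {Q : ℝ × ℝ | IsHalving S P Q}.ncard

/-- The number of halving lines of `S`, counted as unordered pairs of points. -/
noncomputable def numHalvingLines (S : Finset (ℝ × ℝ)) : ℕ :=
  {e : Finset (ℝ × ℝ) | ∃ P Q : ℝ × ℝ, e = {P, Q} ∧ IsHalving S P Q}.ncard

/-- The underlying graph of `S`: vertices are the points of `S`, and two points
are adjacent exactly when the line through them is a halving line of `S`. -/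
def underlyingGraph (S : Finset (ℝ × ℝ)) : SimpleGraph {x : ℝ × ℝ // x ∈ S} where
  Adj P Q := IsHalving S P.1 Q.1 ∧ IsHalving S Q.1 P.1
  symm := ⟨fun _ _ h => ⟨h.2, h.1⟩⟩
  loopless := ⟨fun _ h => h.1.2.2.1 rfl⟩

/-!
Fix `P ∈ S`, let `|S| = 2m + 2`, and pick a direction `d` parallel to none of the vectors
`X - P`. Rotate a line through `P` by a half-turn starting from direction `d`: it passes each
other point of `S` exactly once, in the order of the cotangent of the angle from `d` to `X - P`.
Each such event moves one point from one side of the line to the other, and the number of points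
on the left side jumps between `m` and `m + 1` exactly when the line through `P` and the passed
point is a halving line. After the half-turn the two sides are exchanged, so the left count goes
from `a` to `2m + 1 - a`, which lie on opposite sides of `m + 1/2`: the number of such jumps is
odd.
-/

open Finset

section Sweep

variable {ι α : Type*} [LinearOrder α] (k : ι → α) (p : ι → Prop) [DecidablePred p]

/-- The number of points of `V` on the left of a rotating line when it passes `x`, if `k y` is
the time at which it passes `y` and `p y` says that it moves `y` from its right to its left. -/
def sweepCount (V : Finset ι) (x : ι) : ℕ :=
  #{y ∈ V | p y ∧ k y < k x ∨ ¬ p y ∧ k x < k y}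

variable {k p}

lemma sweepCount_insert_of_lt [DecidableEq ι] {V : Finset ι} {a x : ι} (ha : a ∉ V)
    (hx : k x < k a) :
    sweepCount k p (insert a V) x = sweepCount k p V x + if p a then 0 else 1 := by
  unfold sweepCount
  rw [filter_insert]
  by_cases hpa : p a
  · simp [hpa, hx.not_gt]
  · simp [hpa, hx, card_insert_of_notMem, ha]

lemma sweepCount_insert_self [DecidableEq ι] {V : Finset ι} {a : ι}
    (hV : ∀ y ∈ V, k y < k a) :
    sweepCount k p (insert a V) a = #{y ∈ V | p y} := by
  unfold sweepCount
  rw [filter_insert, if_neg (by simp)]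
  congr 1
  refine filter_congr fun y hy => ?_
  have := hV y hy
  simp [this, this.not_gt]

lemma card_filter_sweepCount_insert [DecidableEq ι] {V : Finset ι} {a : ι} (ha : a ∉ V)
    (hV : ∀ y ∈ V, k y < k a) (m : ℕ) :
    #{x ∈ insert a V | sweepCount k p (insert a V) x = m} =
      #{x ∈ V | sweepCount k p V x + (if p a then 0 else 1) = m} +
        if #{y ∈ V | p y} = m then 1 else 0 := by
  have hV' : {x ∈ V | sweepCount k p (insert a V) x = m} =
      {x ∈ V | sweepCount k p V x + (if p a then 0 else 1) = m} :=
    filter_congr fun x hx => by rw [sweepCount_insert_of_lt ha (hV x hx)]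
  rw [filter_insert, sweepCount_insert_self hV, hV']
  split_ifs <;> simp [ha]

/-- Removing the point of largest key shifts the count of every other point by `[¬ p a]`. -/
theorem odd_card_sweepCount_eq_iff [DecidableEq ι] (V : Finset ι) (hk : Set.InjOn k V) (m : ℕ) :
    Odd #{x ∈ V | sweepCount k p V x = m} ↔
      (#{x ∈ V | p x} ≤ m ↔ m < #{x ∈ V | ¬ p x}) := by
  induction V using Finset.induction_on_max_value k generalizing m with
  | empty => simp
  | insert a V ha hmax ih =>
    have hlt : ∀ y ∈ V, k y < k a := fun y hy => (hmax y hy).lt_of_ne fun h =>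
      ha (hk (mem_insert_of_mem hy) (mem_insert_self a V) h ▸ hy)
    have ih := ih (hk.mono (by simp))
    have hfilter (q : ι → Prop) [DecidablePred q] : a ∉ {x ∈ V | q x} := by simp [ha]
    rw [card_filter_sweepCount_insert ha hlt, filter_insert, filter_insert]
    by_cases hpa : p a
    · simp only [hpa, if_true, if_false, add_zero, not_true_eq_false,
        card_insert_of_notMem (hfilter _)]
      split_ifs <;> simp [Nat.odd_add_one, ih m] <;> omega
    · simp only [hpa, if_true, if_false, not_false_eq_true, card_insert_of_notMem (hfilter _)]
      cases m with
      | zero => split_ifs <;> simp_all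
      | succ m =>
        simp only [Nat.add_right_cancel_iff]
        split_ifs <;> simp [Nat.odd_add_one, ih m] <;> omega

theorem odd_card_sweepCount_eq [DecidableEq ι] {V : Finset ι} (hk : Set.InjOn k V) {m : ℕ}
    (hV : #V = 2 * m + 1) : Odd #{x ∈ V | sweepCount k p V x = m} := by
  rw [odd_card_sweepCount_eq_iff V hk m]
  have : #{x ∈ V | p x} + #{x ∈ V | ¬ p x} = #V := card_filter_add_card_filter_not p
  omega

end Sweep

/-- The cotangent of the angle `θ` from `d` to `u`: `dot2 d u = |d| |u| cos θ` and
`det2 d u = |d| |u| sin θ`. -/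
noncomputable def cotAngle (d u : ℝ × ℝ) : ℝ := dot2 d u / det2 d u

lemma dot2_self_pos {u : ℝ × ℝ} (hu : u ≠ 0) : 0 < dot2 u u := by
  unfold dot2
  by_contra! h
  have h1 : u.1 * u.1 = 0 := by linarith [mul_self_nonneg u.1, mul_self_nonneg u.2]
  have h2 : u.2 * u.2 = 0 := by linarith [mul_self_nonneg u.1, mul_self_nonneg u.2]
  exact hu (Prod.ext (mul_self_eq_zero.1 h1) (mul_self_eq_zero.1 h2))

lemma dot2_self_pos_of_det2_ne_zero {d u : ℝ × ℝ} (h : det2 d u ≠ 0) : 0 < dot2 d d :=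
  dot2_self_pos fun hd => h (by simp [hd, det2])

lemma dot2_self_mul_det2 {d u v : ℝ × ℝ} (hu : det2 d u ≠ 0) (hv : det2 d v ≠ 0) :
    dot2 d d * det2 u v = (cotAngle d u - cotAngle d v) * det2 d u * det2 d v := by
  unfold cotAngle
  field_simp
  simp only [dot2, det2]
  ring

lemma cotAngle_ne_of_det2_ne_zero {d u v : ℝ × ℝ} (hu : det2 d u ≠ 0) (hv : det2 d v ≠ 0)
    (huv : det2 u v ≠ 0) : cotAngle d u ≠ cotAngle d v := by
  intro h
  have := dot2_self_mul_det2 hu hv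
  rw [h, sub_self, zero_mul, zero_mul] at this
  exact mul_ne_zero (dot2_self_pos_of_det2_ne_zero hu).ne' huv this

lemma det2_mul_det2_pos_iff {d u v : ℝ × ℝ} (hu : det2 d u ≠ 0) (hv : det2 d v ≠ 0) :
    0 < det2 d u * det2 u v ↔
      0 < det2 d v ∧ cotAngle d v < cotAngle d u ∨
        ¬ 0 < det2 d v ∧ cotAngle d u < cotAngle d v := by
  have hdd := dot2_self_pos_of_det2_ne_zero hu
  have key : dot2 d d * (det2 d u * det2 u v) =
      det2 d u ^ 2 * ((cotAngle d u - cotAngle d v) * det2 d v) := by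
    rw [mul_left_comm, dot2_self_mul_det2 hu hv]
    ring
  rw [← mul_pos_iff_of_pos_left hdd, key, mul_pos_iff_of_pos_left (by positivity), mul_pos_iff,
    sub_pos, sub_neg, not_lt, hv.le_iff_lt]
  tauto

lemma exists_det2_ne_zero (T : Finset (ℝ × ℝ)) :
    ∃ d, ∀ u ∈ T, u ≠ 0 → det2 d u ≠ 0 := by
  obtain ⟨τ, hτ⟩ := Infinite.exists_notMem_finset (T.image fun u => u.2 / u.1)
  refine ⟨(1, τ), fun u hu hu0 h => ?_⟩
  simp only [det2] at h
  by_cases h1 : u.1 = 0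
  · exact hu0 (Prod.ext h1 (by simpa [h1] using h))
  · exact hτ (mem_image.2 ⟨u, hu, by field_simp; linarith⟩)

lemma eq_smul_of_det2_eq_zero {u v : ℝ × ℝ} (hu : u ≠ 0) (h : det2 u v = 0) :
    v = (dot2 u v / dot2 u u) • u := by
  have hu' := (dot2_self_pos hu).ne'
  unfold dot2 at hu' ⊢
  unfold det2 at h
  ext <;> simp only [Prod.smul_fst, Prod.smul_snd, smul_eq_mul, div_mul_eq_mul_div, eq_div_iff hu']
  · linear_combination -u.2 * h
  · linear_combination u.1 * h

lemma collinear_of_det2_sub_eq_zero {P Q X : ℝ × ℝ} (hPQ : P ≠ Q)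
    (h : det2 (Q - P) (X - P) = 0) : Collinear ℝ ({P, Q, X} : Set (ℝ × ℝ)) := by
  have hX : X = AffineMap.lineMap P Q (dot2 (Q - P) (X - P) / dot2 (Q - P) (Q - P)) := by
    rw [AffineMap.lineMap_apply, vsub_eq_sub, vadd_eq_add,
      ← eq_smul_of_det2_eq_zero (sub_ne_zero.2 hPQ.symm) h, sub_add_cancel]
  have hset : ({P, Q, X} : Set (ℝ × ℝ)) = {X, P, Q} := by
    ext; simp only [Set.mem_insert_iff, Set.mem_singleton_iff]; tauto
  rw [hset]
  exact collinear_insert_of_mem_affineSpan_pair (hX ▸ AffineMap.lineMap_mem_affineSpan_pair _ _ _)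

lemma card_filter_pos_add_card_filter_neg_add_card_filter_eq_zero {ι : Type*} (s : Finset ι)
    (f : ι → ℝ) : #{x ∈ s | 0 < f x} + #{x ∈ s | f x < 0} + #{x ∈ s | f x = 0} = #s := by
  rw [card_filter, card_filter, card_filter, card_eq_sum_ones, ← sum_add_distrib,
    ← sum_add_distrib]
  refine sum_congr rfl fun x _ => ?_
  rcases lt_trichotomy (f x) 0 with h | h | h
  · simp [h, h.ne, h.not_gt]
  · simp [h]
  · simp [h, h.ne', h.not_gt]

lemma GenPos.det2_sub_ne_zero {S : Finset (ℝ × ℝ)} (hgp : GenPos S) {P Q X : ℝ × ℝ}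
    (hP : P ∈ S) (hQ : Q ∈ S) (hX : X ∈ S) (hPQ : P ≠ Q) (hPX : P ≠ X) (hQX : Q ≠ X) :
    det2 (Q - P) (X - P) ≠ 0 :=
  fun h => hgp P hP Q hQ X hX hPQ hPX hQX (collinear_of_det2_sub_eq_zero hPQ h)

lemma GenPos.card_filter_pos_add_card_filter_neg {S : Finset (ℝ × ℝ)} (hgp : GenPos S)
    {P Q : ℝ × ℝ} (hP : P ∈ S) (hQ : Q ∈ S) (hPQ : P ≠ Q) :
    #{X ∈ S | 0 < det2 (Q - P) (X - P)} + #{X ∈ S | det2 (Q - P) (X - P) < 0} + 2 = #S := by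
  have hzero : {X ∈ S | det2 (Q - P) (X - P) = 0} = {P, Q} := by
    ext X
    simp only [mem_filter, mem_insert, mem_singleton]
    constructor
    · rintro ⟨hX, h⟩
      by_contra! hne
      exact hgp.det2_sub_ne_zero hP hQ hX hPQ hne.1.symm hne.2.symm h
    · rintro (rfl | rfl) <;> simp [*, det2, mul_comm]
  rw [← card_filter_pos_add_card_filter_neg_add_card_filter_eq_zero S, hzero, card_pair hPQ]

lemma Set.ncard_sep_coe_finset {α : Type*} (s : Finset α) (p : α → Prop) [DecidablePred p] :
    {x ∈ (s : Set α) | p x}.ncard = #{x ∈ s | p x} := by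
  rw [← Set.ncard_coe_finset, coe_filter]
  rfl

lemma isHalving_iff {S : Finset (ℝ × ℝ)} {P Q : ℝ × ℝ} (hP : P ∈ S) (hQ : Q ∈ S)
    (hPQ : P ≠ Q) :
    IsHalving S P Q ↔ #{X ∈ S | 0 < det2 (Q - P) (X - P)} = (#S - 2) / 2 ∧
      #{X ∈ S | det2 (Q - P) (X - P) < 0} = (#S - 2) / 2 := by
  simp only [IsHalving, Set.ncard_sep_coe_finset, hP, hQ, hPQ, ne_eq, not_false_eq_true, true_and]

open scoped Classical in
lemma hdeg_eq_card_filter (S : Finset (ℝ × ℝ)) (P : ℝ × ℝ) :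
    hdeg S P = #{Q ∈ S.erase P | IsHalving S P Q} := by
  rw [hdeg, ← Set.ncard_coe_finset, coe_filter]
  congr 1
  ext Q
  simp only [Set.mem_ofPred_eq, mem_erase]
  exact ⟨fun h => ⟨⟨h.2.2.1.symm, h.2.1⟩, h⟩, fun h => h.2⟩

/-- Multiplying by `det2 d (Q - P)` picks the side of the line `PQ` that the sweep counts; a
line through two points of `S` with `m` points on one side has `m` on the other. -/
lemma GenPos.isHalving_iff_sweepCount {S : Finset (ℝ × ℝ)} (hgp : GenPos S) {m : ℕ}
    (hS : #S = 2 * m + 2) {P Q d : ℝ × ℝ} (hP : P ∈ S) (hQ : Q ∈ S.erase P)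
    (hd : ∀ X ∈ S.erase P, det2 d (X - P) ≠ 0) :
    IsHalving S P Q ↔
      sweepCount (fun X => cotAngle d (X - P)) (fun X => 0 < det2 d (X - P)) (S.erase P) Q = m := by
  obtain ⟨hQP, hQS⟩ := mem_erase.1 hQ
  have hsplit := hgp.card_filter_pos_add_card_filter_neg hP hQS hQP.symm
  have hsweep : sweepCount (fun X => cotAngle d (X - P)) (fun X => 0 < det2 d (X - P)) (S.erase P) Q
      = #{X ∈ S | 0 < det2 d (Q - P) * det2 (Q - P) (X - P)} := by
    have hP' : P ∉ {X ∈ S | 0 < det2 d (Q - P) * det2 (Q - P) (X - P)} := by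
      rw [mem_filter]; simp [det2]
    rw [sweepCount, filter_congr fun X hX => (det2_mul_det2_pos_iff (hd Q hQ) (hd X hX)).symm,
      filter_erase, erase_eq_of_notMem hP']
  rw [isHalving_iff hP hQS hQP.symm, hsweep]
  rcases (hd Q hQ).lt_or_gt with hneg | hpos
  · simp only [mul_pos_iff, hneg, hneg.not_gt, false_and, true_and, false_or]
    omega
  · simp only [mul_pos_iff_of_pos_left hpos]
    omega

theorem stmt_3_general (S : Finset (ℝ × ℝ)) (heven : Even S.card) (hgp : GenPos S) :
    ∀ P ∈ S, Odd (hdeg S P) := by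
  classical
  intro P hP
  obtain ⟨m, hm⟩ : ∃ m, #S = 2 * m + 2 := by
    obtain ⟨r, hr⟩ := heven
    exact ⟨r - 1, by have := card_pos.2 ⟨P, hP⟩; omega⟩
  obtain ⟨d, hd⟩ := exists_det2_ne_zero (S.image (· - P))
  have hdP : ∀ X ∈ S.erase P, det2 d (X - P) ≠ 0 := fun X hX =>
    hd _ (mem_image_of_mem _ (mem_of_mem_erase hX)) (sub_ne_zero.2 (ne_of_mem_erase hX))
  have hinj : Set.InjOn (fun X => cotAngle d (X - P)) (S.erase P) := by
    intro X hX Y hY h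
    by_contra hXY
    exact cotAngle_ne_of_det2_ne_zero (hdP X hX) (hdP Y hY) (hgp.det2_sub_ne_zero hP
      (mem_of_mem_erase hX) (mem_of_mem_erase hY) (ne_of_mem_erase hX).symm
      (ne_of_mem_erase hY).symm hXY) h
  rw [hdeg_eq_card_filter, filter_congr fun Q hQ => hgp.isHalving_iff_sweepCount hm hP hQ hdP]
  exact odd_card_sweepCount_eq hinj (by rw [card_erase_of_mem hP, hm]; rfl)

/-- every vertex of the underlying graph of `S` has odd degree. -/
theorem stmt_3 (S : Finset (ℝ × ℝ)) (heven : Even S.card) (h4 : 4 ≤ S.card)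
    (hgp : GenPos S) :
    ∀ P ∈ S, Odd (hdeg S P) :=
  stmt_3_general S heven hgp
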